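/- Let A = diag(λ₁,…,λₙ) be positive diagonal, W = (1/(λᵢ+λⱼ))ᵢⱼ, and X Hermitian such that Iₙ + W∘X is positive semi-definite (∘ = Hadamard product). Then the matrix B := A + X + (W∘X)A(W∘X) is positive semi-definite and satisfies log_A(B) = X, i.e., (AB)^{1/2} + (BA)^{1/2} − 2A = X. In other words, the Bures-Wasserstein exponential at A is exp_A(X) = A + X + (W∘X)A(W∘X). -/

import Mathlib

open Matrix Filter Asymptotics
open scoped ComplexOrder

/-- The PSD square root of a matrix (0 if not PSD). -/
noncomputable def msqrt {n : ℕ} (M : Matrix (Fin n) (Fin n) ℂ) : Matrix (Fin n) (Fin n) ℂ :=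
  letI := Classical.propDecidable M.PosSemidef
  if h : M.PosSemidef then
    (h.1.eigenvectorUnitary : Matrix (Fin n) (Fin n) ℂ) *
      Matrix.diagonal ((↑) ∘ Real.sqrt ∘ h.1.eigenvalues) *
      (star h.1.eigenvectorUnitary : Matrix (Fin n) (Fin n) ℂ)
  else 0

/-- `(AB)^{1/2} := A^{1/2} (A^{1/2} B A^{1/2})^{1/2} A^{-1/2}`. -/
noncomputable def sqAB {n : ℕ} (A B : Matrix (Fin n) (Fin n) ℂ) : Matrix (Fin n) (Fin n) ℂ :=
  msqrt A * msqrt (msqrt A * B * msqrt A) * (msqrt A)⁻¹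

/-- Bures-Wasserstein geodesic `A ◇_t B`. -/
noncomputable def geo {n : ℕ} (A B : Matrix (Fin n) (Fin n) ℂ) (t : ℝ) : Matrix (Fin n) (Fin n) ℂ :=
  ((1 - t)^2 : ℝ) • A + (t^2 : ℝ) • B + (t * (1 - t) : ℝ) • (sqAB A B + (sqAB A B)ᴴ)

/-- Bures-Wasserstein distance. -/
noncomputable def dBW {n : ℕ} (A B : Matrix (Fin n) (Fin n) ℂ) : ℝ :=
  Real.sqrt ((Matrix.trace A).re + (Matrix.trace B).re -
    2 * (Matrix.trace (msqrt (msqrt A * B * msqrt A))).re)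

/-!
With `Y := W ∘ X`, the entrywise identity `(λᵢ + λⱼ) Yᵢⱼ = Xᵢⱼ` says `X = Y A + A Y`, so
`B = A + X + Y A Y = (1 + Y) A (1 + Y)`, which is PSD because `1 + Y` is Hermitian.
With `S = A^{1/2}`, the matrix `C = S (1 + Y) S` is PSD and `C² = S B S`, hence
`(AB)^{1/2} = S C S⁻¹ = A (1 + Y)`, whose adjoint is `(1 + Y) A`; their sum minus `2A` is
`A Y + Y A = X`.
-/

open scoped MatrixOrder in
lemma msqrt_eq_of_sq_eq {n : ℕ} {M C : Matrix (Fin n) (Fin n) ℂ} (hC : C.PosSemidef)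
    (h : C ^ 2 = M) : msqrt M = C := by
  have hM : M.PosSemidef := h ▸ hC.pow 2
  have key : CFC.sqrt M = C := CFC.sqrt_unique (by rw [← h, sq]) hC.nonneg
  rw [CFC.sqrt_eq_real_sqrt M hM.nonneg, cfcₙ_eq_cfc, hM.1.cfc_eq] at key
  rw [msqrt, dif_pos hM, ← key, IsHermitian.cfc, Unitary.conjStarAlgAut_apply]
  rfl

lemma exists_posSemidef_isUnit_det_sq_eq_diagonal {n : ℕ} {lam : Fin n → ℝ}
    (hlam : ∀ i, 0 < lam i) :
    ∃ S : Matrix (Fin n) (Fin n) ℂ, S.PosSemidef ∧ IsUnit S.det ∧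
      S ^ 2 = diagonal fun i => ((lam i : ℝ) : ℂ) := by
  refine ⟨diagonal fun i => ((Real.sqrt (lam i) : ℝ) : ℂ), ?_, ?_, ?_⟩
  · exact PosSemidef.diagonal fun i => Complex.zero_le_real.mpr (Real.sqrt_nonneg _)
  · rw [det_diagonal, isUnit_iff_ne_zero]
    exact Finset.prod_ne_zero_iff.mpr fun i _ =>
      Complex.ofReal_ne_zero.mpr (Real.sqrt_ne_zero'.mpr (hlam i))
  · rw [sq, diagonal_mul_diagonal]
    congr 1
    ext i
    rw [← Complex.ofReal_mul, Real.mul_self_sqrt (hlam i).le]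

lemma sqAB_mul_mul_eq {n : ℕ} {A S T : Matrix (Fin n) (Fin n) ℂ} (hS : S.PosSemidef)
    (hSdet : IsUnit S.det) (hSA : S ^ 2 = A) (hT : (S * T * S).PosSemidef) :
    sqAB A (T * A * T) = A * T := by
  rw [sqAB, msqrt_eq_of_sq_eq hS hSA,
    msqrt_eq_of_sq_eq hT (by rw [← hSA]; noncomm_ring)]
  calc S * (S * T * S) * S⁻¹ = S * S * T * (S * S⁻¹) := by noncomm_ring
    _ = A * T := by rw [mul_nonsing_inv S hSdet, ← hSA, sq, mul_one]

lemma hadamard_mul_diagonal_add_diagonal_mul_hadamard {ι K : Type*} [Fintype ι]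
    [DecidableEq ι] [Field K] {d : ι → K} (hd : ∀ i j, d i + d j ≠ 0) (X : Matrix ι ι K) :
    (of fun i j => (d i + d j)⁻¹) ⊙ X * diagonal d +
      diagonal d * ((of fun i j => (d i + d j)⁻¹) ⊙ X) = X := by
  ext i j
  simp only [Matrix.add_apply, mul_diagonal, diagonal_mul, hadamard_apply, of_apply]
  field_simp [hd i j]
  ring

lemma add_add_mul_mul_eq_mul_mul {R : Type*} [Ring R] {A X Y : R} (h : Y * A + A * Y = X) :
    A + X + Y * A * Y = (1 + Y) * A * (1 + Y) := by
  subst h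
  noncomm_ring

theorem stmt13_general {n : ℕ} (lam : Fin n → ℝ) (hlam : ∀ i, 0 < lam i)
    (X : Matrix (Fin n) (Fin n) ℂ)
    (W : Matrix (Fin n) (Fin n) ℂ)
    (hW : W = Matrix.of fun i j => ((1 / (lam i + lam j) : ℝ) : ℂ))
    (A : Matrix (Fin n) (Fin n) ℂ)
    (hA : A = Matrix.diagonal fun i => ((lam i : ℝ) : ℂ))
    (hPSD : ((1 : Matrix (Fin n) (Fin n) ℂ) + Matrix.hadamard W X).PosSemidef) :
    (A + X + Matrix.hadamard W X * A * Matrix.hadamard W X).PosSemidef ∧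
    sqAB A (A + X + Matrix.hadamard W X * A * Matrix.hadamard W X) +
        (sqAB A (A + X + Matrix.hadamard W X * A * Matrix.hadamard W X))ᴴ -
        (2 : ℝ) • A = X := by
  have hXY : hadamard W X * A + A * hadamard W X = X := by
    have hne : ∀ i j, ((lam i : ℝ) : ℂ) + ((lam j : ℝ) : ℂ) ≠ 0 := fun i j => by
      exact_mod_cast (add_pos (hlam i) (hlam j)).ne'
    have hW' : W = of fun i j => (((lam i : ℝ) : ℂ) + ((lam j : ℝ) : ℂ))⁻¹ := by
      rw [hW]
      ext i j
      simp
    rw [hW', hA]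
    exact hadamard_mul_diagonal_add_diagonal_mul_hadamard hne X
  set Y := hadamard W X
  obtain ⟨S, hS, hSdet, hSA⟩ := exists_posSemidef_isUnit_det_sq_eq_diagonal hlam
  rw [← hA] at hSA
  have hApsd : A.PosSemidef := hSA ▸ hS.pow 2
  have hTH : (1 + Y)ᴴ = 1 + Y := hPSD.1
  rw [add_add_mul_mul_eq_mul_mul hXY]
  have hB := hApsd.mul_mul_conjTranspose_same (1 + Y)
  rw [hTH] at hB
  refine ⟨hB, ?_⟩
  have hC := hPSD.conjTranspose_mul_mul_same S
  rw [hS.1.eq] at hC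
  rw [sqAB_mul_mul_eq hS hSdet hSA hC, conjTranspose_mul, hTH, hApsd.1.eq, two_smul, ← hXY,
    mul_add, add_mul, mul_one, one_mul]
  abel

theorem stmt13 {n : ℕ} (lam : Fin n → ℝ) (hlam : ∀ i, 0 < lam i)
    (X : Matrix (Fin n) (Fin n) ℂ) (hX : X.IsHermitian)
    (W : Matrix (Fin n) (Fin n) ℂ)
    (hW : W = Matrix.of fun i j => ((1 / (lam i + lam j) : ℝ) : ℂ))
    (A : Matrix (Fin n) (Fin n) ℂ)
    (hA : A = Matrix.diagonal fun i => ((lam i : ℝ) : ℂ))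
    (hPSD : ((1 : Matrix (Fin n) (Fin n) ℂ) + Matrix.hadamard W X).PosSemidef) :
    (A + X + Matrix.hadamard W X * A * Matrix.hadamard W X).PosSemidef ∧
    sqAB A (A + X + Matrix.hadamard W X * A * Matrix.hadamard W X) +
        (sqAB A (A + X + Matrix.hadamard W X * A * Matrix.hadamard W X))ᴴ -
        (2 : ℝ) • A = X :=
  stmt13_general lam hlam X W hW A hA hPSD
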